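/- For p ∈ ℤ²∖{0} and q ∈ ℤ² not a real multiple of p, satisfying ‖q‖ = inf{‖q + n p‖ : n ∈ ℤ}, the inequality |β(q)| · sup_{n∈ℤ} |γ_n| ≤ c(p)/‖q‖ holds with c(p) = ‖p‖/2, where β(q) = −(1/(2‖p‖²))·det[[q₁,p₁],[q₂,p₂]]·Γ with |Γ| = 1 and γ_n = −‖p‖²/‖q + n p‖². -/
import Mathlib


/-- Euclidean norm of an integer vector, as a real number. -/
noncomputable def nrm (a : ℤ × ℤ) : ℝ := Real.sqrt ((a.1 : ℝ) ^ 2 + (a.2 : ℝ) ^ 2)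

lemma nrm_nonneg (a : ℤ × ℤ) : 0 ≤ nrm a := Real.sqrt_nonneg _

lemma nrm_sq (a : ℤ × ℤ) : (nrm a) ^ 2 = (a.1 : ℝ) ^ 2 + (a.2 : ℝ) ^ 2 := by
  rw [nrm, Real.sq_sqrt]; positivity

lemma nrm_pos (a : ℤ × ℤ) (h : ¬((a.1 : ℝ) = 0 ∧ (a.2 : ℝ) = 0)) : 0 < nrm a := by
  rw [nrm, Real.sqrt_pos]
  rcases not_and_or.mp h with h1 | h1
  · have : (0:ℝ) < (a.1 : ℝ) ^ 2 := by positivity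
    nlinarith [sq_nonneg ((a.2 : ℝ))]
  · have : (0:ℝ) < (a.2 : ℝ) ^ 2 := by positivity
    nlinarith [sq_nonneg ((a.1 : ℝ))]

theorem beta_gamma_estimate (p q : ℤ × ℤ) (hp : p ≠ 0)
    (hq : ∀ t : ℝ, ¬((q.1 : ℝ) = t * (p.1 : ℝ) ∧ (q.2 : ℝ) = t * (p.2 : ℝ)))
    (hmin : ∀ n : ℤ, nrm q ≤ nrm (q + n • p))
    (Γ : ℂ) (hΓ : ‖Γ‖ = 1) :
    ‖(-(1 / (2 * (nrm p) ^ 2)) * (((q.1 * p.2 - q.2 * p.1 : ℤ) : ℝ)) : ℂ) * Γ‖ *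
        (⨆ n : ℤ, |(-(nrm p) ^ 2 / (nrm (q + n • p)) ^ 2 : ℝ)|) ≤
      (nrm p / 2) / nrm q := by
  have hqpos : 0 < nrm q := by
    apply nrm_pos
    intro ⟨h1, h2⟩
    exact hq 0 ⟨by rw [h1]; ring, by rw [h2]; ring⟩
  have hppos : 0 < nrm p := by
    apply nrm_pos
    intro ⟨h1, h2⟩
    apply hp
    have e1 : p.1 = 0 := by exact_mod_cast h1
    have e2 : p.2 = 0 := by exact_mod_cast h2
    exact Prod.ext e1 e2
  set np := nrm p with hnp
  set nq := nrm q with hnq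
  set d : ℝ := ((q.1 * p.2 - q.2 * p.1 : ℤ) : ℝ) with hd
  -- Cauchy-Schwarz style bound
  have hcs : |d| ≤ np * nq := by
    have hd2 : d ^ 2 ≤ (np * nq) ^ 2 := by
      rw [mul_pow, hnp, hnq, nrm_sq, nrm_sq, hd]
      push_cast
      nlinarith [sq_nonneg ((q.1 : ℝ) * (p.1 : ℝ) + (q.2 : ℝ) * (p.2 : ℝ))]
    calc |d| = Real.sqrt (d ^ 2) := (Real.sqrt_sq_eq_abs d).symm
      _ ≤ Real.sqrt ((np * nq) ^ 2) := Real.sqrt_le_sqrt hd2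
      _ = np * nq := Real.sqrt_sq (by positivity)
  -- the sup bound
  have hsup : (⨆ n : ℤ, |(-(nrm p) ^ 2 / (nrm (q + n • p)) ^ 2 : ℝ)|) ≤ np ^ 2 / nq ^ 2 := by
    apply ciSup_le
    intro n
    have hpos : 0 < nrm (q + n • p) := lt_of_lt_of_le hqpos (hmin n)
    have habs : |(-(nrm p) ^ 2 / (nrm (q + n • p)) ^ 2 : ℝ)| =
        np ^ 2 / (nrm (q + n • p)) ^ 2 := by
      rw [abs_div, abs_neg, abs_of_nonneg (by positivity : (0:ℝ) ≤ (nrm p)^2),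
        abs_of_nonneg (by positivity : (0:ℝ) ≤ (nrm (q + n • p))^2)]
    rw [habs]
    apply div_le_div_of_nonneg_left (by positivity) (by positivity)
    exact pow_le_pow_left₀ (le_of_lt hqpos) (hmin n) 2
  -- norm of beta
  have hnorm : ‖(-(1 / (2 * (nrm p) ^ 2)) * (((q.1 * p.2 - q.2 * p.1 : ℤ) : ℝ)) : ℂ) * Γ‖ =
      |d| / (2 * np ^ 2) := by
    rw [norm_mul, hΓ, mul_one]
    rw [show (-(1 / (2 * (nrm p) ^ 2)) * (((q.1 * p.2 - q.2 * p.1 : ℤ) : ℝ)) : ℂ) =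
      ((-(1 / (2 * (nrm p) ^ 2)) * d : ℝ) : ℂ) by push_cast [hd]; ring]
    rw [Complex.norm_real, Real.norm_eq_abs, abs_mul, abs_neg, abs_div,
      abs_of_nonneg (by positivity : (0:ℝ) ≤ 2 * (nrm p)^2), abs_one]
    ring
  rw [hnorm]
  calc |d| / (2 * np ^ 2) * (⨆ n : ℤ, |(-(nrm p) ^ 2 / (nrm (q + n • p)) ^ 2 : ℝ)|)
      ≤ |d| / (2 * np ^ 2) * (np ^ 2 / nq ^ 2) :=
        mul_le_mul_of_nonneg_left hsup (by positivity)
    _ ≤ (np / 2) / nq := by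
        rw [div_mul_div_comm, div_le_div_iff₀ (by positivity) (by positivity)]
        nlinarith [mul_le_mul_of_nonneg_right hcs
          (show (0:ℝ) ≤ 2 * np ^ 2 * nq by positivity), sq_nonneg np, sq_nonneg nq]
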